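/- arXiv:2405.07253 — 7 statements merged into one kernel-verified Lean document; each statement's English description precedes it below -/
import Mathlib

section
/- For any probability measure μ on ℝⁿ and any point x ∈ ℝⁿ, the half-space depth satisfies q_μ(x) ≤ exp(−Λ*_μ(x)), where Λ*_μ is the Cramér transform of μ. -/
open MeasureTheory Real Set

/-- Half-space depth of a probability measure on `ℝⁿ`:
`q_μ(x) = inf_{‖ξ‖=1} μ {y | ⟨y,ξ⟩ ≥ ⟨x,ξ⟩}`. -/
noncomputable def hsDepth {n : ℕ} (μ : Measure (EuclideanSpace ℝ (Fin n)))
    (x : EuclideanSpace ℝ (Fin n)) : ℝ :=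
  ⨅ ξ : {ξ : EuclideanSpace ℝ (Fin n) // ‖ξ‖ = 1},
    (μ {y | (inner ℝ x ξ.1 : ℝ) ≤ inner ℝ y ξ.1}).toReal

/-- Cramér transform of a probability measure on `ℝⁿ`:
`Λ*_μ(x) = sup_ξ (⟨x,ξ⟩ − log ∫ e^{⟨y,ξ⟩} dμ(y))`, the supremum running over all `ξ`
for which the exponential moment is finite. -/
noncomputable def cramer {n : ℕ} (μ : Measure (EuclideanSpace ℝ (Fin n)))
    (x : EuclideanSpace ℝ (Fin n)) : ℝ :=
  ⨆ ξ : {ξ : EuclideanSpace ℝ (Fin n) // Integrable (fun y => Real.exp (inner ℝ y ξ : ℝ)) μ},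
    ((inner ℝ x ξ.1 : ℝ) - Real.log (∫ y, Real.exp ((inner ℝ y ξ.1 : ℝ)) ∂μ))

/-!
For every `ξ` with finite exponential moment, Chernoff's bound gives
`μ {⟨y,ξ⟩ ≥ ⟨x,ξ⟩} ≤ exp (-⟨x,ξ⟩) ∫ exp ⟨y,ξ⟩ dμ`, and the left side bounds the depth
because the half-space only depends on the direction of `ξ`. When the depth is positive,
taking logarithms bounds every term of the supremum defining `Λ*_μ(x)` by `-log q_μ(x)`.
-/

namespace HalfSpaceDepth

variable {n : ℕ} (μ : Measure (EuclideanSpace ℝ (Fin n))) (x : EuclideanSpace ℝ (Fin n))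

theorem hsDepth_nonneg : 0 ≤ hsDepth μ x :=
  Real.iInf_nonneg fun _ => ENNReal.toReal_nonneg

theorem hsDepth_le_measureReal_of_norm_eq_one {u : EuclideanSpace ℝ (Fin n)} (hu : ‖u‖ = 1) :
    hsDepth μ x ≤ μ.real {y | inner ℝ x u ≤ inner ℝ y u} := by
  rw [measureReal_def]
  exact ciInf_le ⟨0, by rintro _ ⟨_, rfl⟩; exact ENNReal.toReal_nonneg⟩ (⟨u, hu⟩ : {u // ‖u‖ = 1})

theorem hsDepth_le_measureReal_univ [IsFiniteMeasure μ] : hsDepth μ x ≤ μ.real univ := by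
  rcases isEmpty_or_nonempty {u : EuclideanSpace ℝ (Fin n) // ‖u‖ = 1} with hS | ⟨u, hu⟩
  · -- only for `n = 0`, where the empty infimum is `0`
    simp [hsDepth, Real.iInf_of_isEmpty]
  · exact (hsDepth_le_measureReal_of_norm_eq_one μ x hu).trans (measureReal_mono (subset_univ _))

theorem hsDepth_le_measureReal_halfSpace [IsFiniteMeasure μ] (ξ : EuclideanSpace ℝ (Fin n)) :
    hsDepth μ x ≤ μ.real {y | inner ℝ x ξ ≤ inner ℝ y ξ} := by
  rcases eq_or_ne ξ 0 with rfl | hξ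
  · simpa using hsDepth_le_measureReal_univ μ x
  have hnorm : 0 < ‖ξ‖ := norm_pos_iff.mpr hξ
  have hu : ‖‖ξ‖⁻¹ • ξ‖ = 1 := by
    rw [norm_smul, norm_inv, norm_norm, inv_mul_cancel₀ hnorm.ne']
  convert hsDepth_le_measureReal_of_norm_eq_one μ x hu using 4 with y
  simp only [real_inner_smul_right]
  exact (mul_le_mul_iff_of_pos_left (inv_pos.mpr hnorm)).symm

theorem hsDepth_le_exp_neg_inner_mul_integral [IsFiniteMeasure μ] {ξ : EuclideanSpace ℝ (Fin n)}
    (hξ : Integrable (fun y => exp (inner ℝ y ξ)) μ) :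
    hsDepth μ x ≤ exp (-inner ℝ x ξ) * ∫ y, exp (inner ℝ y ξ) ∂μ := by
  have chernoff := ProbabilityTheory.measure_ge_le_exp_mul_mgf (X := fun y => inner ℝ y ξ)
    (inner ℝ x ξ) zero_le_one (by simpa using hξ)
  simp only [ProbabilityTheory.mgf, neg_mul, one_mul] at chernoff
  exact (hsDepth_le_measureReal_halfSpace μ x ξ).trans chernoff

theorem inner_sub_log_integral_exp_le_neg_log_hsDepth [IsFiniteMeasure μ] [NeZero μ]
    (hpos : 0 < hsDepth μ x) {ξ : EuclideanSpace ℝ (Fin n)}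
    (hξ : Integrable (fun y => exp (inner ℝ y ξ)) μ) :
    inner ℝ x ξ - log (∫ y, exp (inner ℝ y ξ) ∂μ) ≤ -log (hsDepth μ x) := by
  have hI : 0 < ∫ y, exp (inner ℝ y ξ) ∂μ := integral_exp_pos hξ
  have hlog := log_le_log hpos (hsDepth_le_exp_neg_inner_mul_integral μ x hξ)
  rw [log_mul (exp_ne_zero _) hI.ne', log_exp] at hlog
  linarith

end HalfSpaceDepth

open HalfSpaceDepth in
/-- For any probability measure `μ` on `ℝⁿ` and any `x ∈ ℝⁿ`,
`q_μ(x) ≤ exp (−Λ*_μ(x))`. -/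
theorem depth_le_exp_neg_cramer {n : ℕ} (μ : Measure (EuclideanSpace ℝ (Fin n)))
    [IsProbabilityMeasure μ] (x : EuclideanSpace ℝ (Fin n)) :
    hsDepth μ x ≤ Real.exp (-(cramer μ x)) := by
  rcases (hsDepth_nonneg μ x).eq_or_lt with hzero | hpos
  · rw [← hzero]; positivity
  have : Nonempty {ξ : EuclideanSpace ℝ (Fin n) //
      Integrable (fun y => exp (inner ℝ y ξ)) μ} := ⟨⟨0, by simp⟩⟩
  have hcramer : cramer μ x ≤ -log (hsDepth μ x) :=
    ciSup_le fun ξ => inner_sub_log_integral_exp_le_neg_log_hsDepth μ x hpos ξ.2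
  calc hsDepth μ x = exp (log (hsDepth μ x)) := (exp_log hpos).symm
    _ ≤ exp (-cramer μ x) := exp_le_exp.mpr (by linarith)
end

section
/- Let X be any real random variable with half-space depth q(x) = min{P(X ≤ x), P(X ≥ x)}. For every p > 0, one has (2^p (p+1))^{-1} ≤ E[q(X)^p] ≤ 1. -/
/-!
With `F x = P(X ≤ x)`, the variable `F(X)` stochastically dominates the uniform law on `[0, 1]`:
`P(F(X) ≤ c) ≤ c`. By inner regularity of the law of `X` it suffices to bound the mass of a
compact subset of `{x | F x ≤ c}`, and such a set lies below its own maximum `m`, where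
`F m ≤ c`. Applying this to `X` and `-X` gives `P(q(X) < t) ≤ 2t`, so `q(X)` dominates the
uniform law on `[0, 1/2]`, and the layer-cake formula yields
`E[q(X)^p] ≥ p ∫₀^{1/2} (1 - 2t) t^(p-1) dt = (2^p (p+1))⁻¹`. The upper bound holds as `q ≤ 1`.
-/

open MeasureTheory Set
open scoped ENNReal

/-- One-dimensional half-space depth of a random variable `X` (defined on `(Ω, ℙ)`):
`q(x) = min {P(X ≤ x), P(X ≥ x)}`. -/
noncomputable def depth1 {Ω : Type*} [MeasurableSpace Ω] (ℙ : Measure Ω) (X : Ω → ℝ)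
    (x : ℝ) : ℝ :=
  min (ℙ {ω | X ω ≤ x}).toReal (ℙ {ω | x ≤ X ω}).toReal

theorem measure_le_of_forall_measure_Iic_le {α : Type*} [TopologicalSpace α] [LinearOrder α]
    [ClosedIciTopology α] [MeasurableSpace α] (μ : Measure α) [μ.InnerRegular]
    {s : Set α} (hs : MeasurableSet s) {c : ℝ≥0∞} (h : ∀ x ∈ s, μ (Iic x) ≤ c) : μ s ≤ c := by
  rw [hs.measure_eq_iSup_isCompact μ]
  refine iSup₂_le fun K hKs => iSup_le fun hK => ?_
  rcases K.eq_empty_or_nonempty with rfl | hK_ne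
  · simp
  obtain ⟨m, hmK, hm⟩ := hK.exists_isGreatest hK_ne
  exact (measure_mono fun x hx => hm hx).trans (h m (hKs hmK))

section RandomVariable

variable {Ω : Type*} [MeasurableSpace Ω] (ℙ : Measure Ω) {X : Ω → ℝ}

theorem measure_cdf_comp_le [IsFiniteMeasure ℙ] (hX : Measurable X) (c : ℝ≥0∞) :
    ℙ {ω | ℙ {ω' | X ω' ≤ X ω} ≤ c} ≤ c := by
  have hF : Monotone fun x => ℙ {ω | X ω ≤ x} := fun x y hxy =>
    measure_mono fun ω h => le_trans h hxy
  have hs : MeasurableSet {x | ℙ {ω | X ω ≤ x} ≤ c} :=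
    measurableSet_le hF.measurable measurable_const
  have := measure_le_of_forall_measure_Iic_le (ℙ.map X) hs fun x hx => by
    rwa [Measure.map_apply hX measurableSet_Iic]
  rwa [Measure.map_apply hX hs] at this

theorem measure_survival_comp_le [IsFiniteMeasure ℙ] (hX : Measurable X) (c : ℝ≥0∞) :
    ℙ {ω | ℙ {ω' | X ω ≤ X ω'} ≤ c} ≤ c := by
  simpa only [Pi.neg_apply, neg_le_neg_iff] using measure_cdf_comp_le ℙ hX.neg c

variable (X)

theorem depth1_nonneg (x : ℝ) : 0 ≤ depth1 ℙ X x :=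
  le_min ENNReal.toReal_nonneg ENNReal.toReal_nonneg

theorem depth1_le_one [IsProbabilityMeasure ℙ] (x : ℝ) : depth1 ℙ X x ≤ 1 :=
  min_le_of_left_le measureReal_le_one

theorem measurable_depth1 [IsFiniteMeasure ℙ] : Measurable (depth1 ℙ X) := by
  have hF : Monotone fun x => (ℙ {ω | X ω ≤ x}).toReal := fun x y hxy =>
    ENNReal.toReal_mono (measure_ne_top _ _) (measure_mono fun ω h => le_trans h hxy)
  have hS : Antitone fun x => (ℙ {ω | x ≤ X ω}).toReal := fun x y hxy =>
    ENNReal.toReal_mono (measure_ne_top _ _) (measure_mono fun ω h => le_trans hxy h)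
  exact hF.measurable.min hS.measurable

variable {X}

theorem measure_depth1_comp_lt_le [IsFiniteMeasure ℙ] (hX : Measurable X) {t : ℝ} (ht : 0 ≤ t) :
    ℙ {ω | depth1 ℙ X (X ω) < t} ≤ ENNReal.ofReal (2 * t) := by
  have hle : ∀ s : Set Ω, (ℙ s).toReal < t → ℙ s ≤ ENNReal.ofReal t := fun s hs =>
    (ENNReal.le_ofReal_iff_toReal_le (measure_ne_top _ _) ht).2 hs.le
  have hsub : {ω | depth1 ℙ X (X ω) < t} ⊆
      {ω | ℙ {ω' | X ω' ≤ X ω} ≤ ENNReal.ofReal t} ∪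
        {ω | ℙ {ω' | X ω ≤ X ω'} ≤ ENNReal.ofReal t} := fun ω hω =>
    (min_lt_iff.1 hω).imp (hle _) (hle _)
  calc ℙ {ω | depth1 ℙ X (X ω) < t}
      ≤ ℙ {ω | ℙ {ω' | X ω' ≤ X ω} ≤ ENNReal.ofReal t} +
          ℙ {ω | ℙ {ω' | X ω ≤ X ω'} ≤ ENNReal.ofReal t} :=
        (measure_mono hsub).trans (measure_union_le _ _)
    _ ≤ ENNReal.ofReal t + ENNReal.ofReal t :=
        add_le_add (measure_cdf_comp_le ℙ hX _) (measure_survival_comp_le ℙ hX _)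
    _ = ENNReal.ofReal (2 * t) := by rw [two_mul, ENNReal.ofReal_add ht ht]

end RandomVariable

theorem integral_one_sub_mul_mul_rpow {c p : ℝ} (hc : 0 < c) (hp : 0 < p) :
    ∫ t in (0 : ℝ)..c⁻¹, (1 - c * t) * t ^ (p - 1) = (p * (c ^ p * (p + 1)))⁻¹ := by
  have h_expand : ∀ t ∈ uIcc 0 c⁻¹, (1 - c * t) * t ^ (p - 1) = t ^ (p - 1) - c * t ^ p := by
    intro t ht
    rw [uIcc_of_le (inv_nonneg.2 hc.le)] at ht
    have := Real.rpow_add_one' ht.1 (show p - 1 + 1 ≠ 0 by linarith)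
    rw [sub_add_cancel] at this
    rw [this]
    ring
  have h_pm1 : IntervalIntegrable (fun t : ℝ => t ^ (p - 1)) volume 0 c⁻¹ :=
    intervalIntegral.intervalIntegrable_rpow' (by linarith)
  have h_p : IntervalIntegrable (fun t : ℝ => t ^ p) volume 0 c⁻¹ :=
    intervalIntegral.intervalIntegrable_rpow' (by linarith)
  rw [intervalIntegral.integral_congr h_expand, intervalIntegral.integral_sub h_pm1
    (h_p.const_mul c), intervalIntegral.integral_const_mul,
    integral_rpow (Or.inl (by linarith)), integral_rpow (Or.inl (by linarith)), sub_add_cancel,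
    Real.zero_rpow hp.ne', Real.zero_rpow (by linarith), Real.rpow_add_one (inv_ne_zero hc.ne'),
    Real.inv_rpow hc.le]
  have : 0 < c ^ p := Real.rpow_pos_of_pos hc p
  field_simp
  ring

theorem le_lintegral_rpow_of_measure_lt_le {Ω : Type*} [MeasurableSpace Ω] (μ : Measure Ω)
    [IsProbabilityMeasure μ] {f : Ω → ℝ} (hf : Measurable f) (hf_nn : 0 ≤ f) {c p : ℝ}
    (hc : 0 < c) (hp : 0 < p) (h : ∀ t > 0, μ {ω | f ω < t} ≤ ENNReal.ofReal (c * t)) :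
    ENNReal.ofReal ((c ^ p * (p + 1))⁻¹) ≤ ∫⁻ ω, ENNReal.ofReal (f ω ^ p) ∂μ := by
  have h_ct : ∀ t ∈ Ioc 0 c⁻¹, c * t ≤ 1 := fun t ht => by
    rw [← le_inv_mul_iff₀ hc, mul_one]
    exact ht.2
  have h_tail : ∀ t ∈ Ioc 0 c⁻¹, ENNReal.ofReal ((1 - c * t) * t ^ (p - 1)) ≤
      μ {ω | t ≤ f ω} * ENNReal.ofReal (t ^ (p - 1)) := by
    intro t ht
    rw [ENNReal.ofReal_mul (by linarith [h_ct t ht])]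
    gcongr
    calc ENNReal.ofReal (1 - c * t) = 1 - ENNReal.ofReal (c * t) := by
          rw [ENNReal.ofReal_sub 1 (mul_pos hc ht.1).le, ENNReal.ofReal_one]
      _ ≤ 1 - μ {ω | f ω < t} := tsub_le_tsub_left (h t ht.1) 1
      _ = μ {ω | t ≤ f ω} := by
          rw [← prob_compl_eq_one_sub (measurableSet_lt hf measurable_const)]
          simp only [compl_ofPred, not_lt]
  have h_int : IntervalIntegrable (fun t => (1 - c * t) * t ^ (p - 1)) volume 0 c⁻¹ :=
    (intervalIntegral.intervalIntegrable_rpow' (by linarith)).continuousOn_mul (by fun_prop)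
  have h_nonneg : 0 ≤ᵐ[volume.restrict (Ioc 0 c⁻¹)] fun t => (1 - c * t) * t ^ (p - 1) :=
    (ae_restrict_iff' measurableSet_Ioc).2 (.of_forall fun t ht =>
      mul_nonneg (by linarith [h_ct t ht]) (Real.rpow_nonneg ht.1.le _))
  calc ENNReal.ofReal ((c ^ p * (p + 1))⁻¹)
      = ENNReal.ofReal p * ENNReal.ofReal (∫ t in (0 : ℝ)..c⁻¹, (1 - c * t) * t ^ (p - 1)) := by
        rw [← ENNReal.ofReal_mul hp.le, integral_one_sub_mul_mul_rpow hc hp, mul_inv p,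
          mul_inv_cancel_left₀ hp.ne']
    _ = ENNReal.ofReal p * ∫⁻ t in Ioc 0 c⁻¹, ENNReal.ofReal ((1 - c * t) * t ^ (p - 1)) := by
        rw [intervalIntegral.integral_of_le (inv_nonneg.2 hc.le),
          ofReal_integral_eq_lintegral_ofReal h_int.1 h_nonneg]
    _ ≤ ENNReal.ofReal p * ∫⁻ t in Ioc 0 c⁻¹, μ {ω | t ≤ f ω} * ENNReal.ofReal (t ^ (p - 1)) := by
        gcongr ENNReal.ofReal p * ?_
        exact setLIntegral_mono' measurableSet_Ioc h_tail
    _ ≤ ENNReal.ofReal p * ∫⁻ t in Ioi 0, μ {ω | t ≤ f ω} * ENNReal.ofReal (t ^ (p - 1)) := by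
        gcongr
        exact Ioc_subset_Ioi_self
    _ = ∫⁻ ω, ENNReal.ofReal (f ω ^ p) ∂μ :=
        (lintegral_rpow_eq_lintegral_meas_le_mul μ (.of_forall hf_nn) hf.aemeasurable hp).symm

/-- For any real random variable `X` and any `p > 0`,
`(2^p (p+1))⁻¹ ≤ E[q(X)^p] ≤ 1`. -/
theorem depth_pos_moments {Ω : Type*} [MeasurableSpace Ω]
    (ℙ : Measure Ω) [IsProbabilityMeasure ℙ] (X : Ω → ℝ) (hX : Measurable X)
    (p : ℝ) (hp : 0 < p) :
    ((2 : ℝ) ^ p * (p + 1))⁻¹ ≤ ∫ ω, (depth1 ℙ X (X ω)) ^ p ∂ℙ ∧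
      ∫ ω, (depth1 ℙ X (X ω)) ^ p ∂ℙ ≤ 1 := by
  have h_nonneg (ω : Ω) : 0 ≤ depth1 ℙ X (X ω) ^ p := Real.rpow_nonneg (depth1_nonneg ℙ X _) p
  have h_le_one (ω : Ω) : depth1 ℙ X (X ω) ^ p ≤ 1 :=
    Real.rpow_le_one (depth1_nonneg ℙ X _) (depth1_le_one ℙ X _) hp.le
  have h_meas : Measurable fun ω => depth1 ℙ X (X ω) := (measurable_depth1 ℙ X).comp hX
  have h_int : Integrable (fun ω => depth1 ℙ X (X ω) ^ p) ℙ :=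
    .of_bound (h_meas.pow_const p).aestronglyMeasurable 1 (.of_forall fun ω => by
      rw [Real.norm_of_nonneg (h_nonneg ω)]; exact h_le_one ω)
  refine ⟨?_, (integral_mono h_int (integrable_const 1) h_le_one).trans_eq (by simp)⟩
  have h_low := le_lintegral_rpow_of_measure_lt_le ℙ h_meas (fun ω => depth1_nonneg ℙ X _)
    two_pos hp fun t ht => measure_depth1_comp_lt_le ℙ hX ht.le
  rwa [← ofReal_integral_eq_lintegral_ofReal h_int (.of_forall h_nonneg),
    ENNReal.ofReal_le_ofReal_iff (integral_nonneg h_nonneg)] at h_low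
end

section
/- Let μ be a probability measure on ℝⁿ such that for every unit vector ξ the function x ↦ P(⟨X,ξ⟩ ≥ x) is log-concave on ℝ (X ~ μ). Then the half-space depth q_μ is a log-concave function on ℝⁿ. -/
open MeasureTheory Real Set

theorem Real.iInf_rpow_mul_iInf_rpow_le {ι : Type*} {f g h : ι → ℝ} {p q : ℝ}
    (hf : ∀ i, 0 ≤ f i) (hg : ∀ i, 0 ≤ g i) (hp : 0 ≤ p) (hq : 0 < q)
    (hfgh : ∀ i, f i ^ p * g i ^ q ≤ h i) :
    (⨅ i, f i) ^ p * (⨅ i, g i) ^ q ≤ ⨅ i, h i := by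
  cases isEmpty_or_nonempty ι with
  | inl _ => -- over an empty index type every infimum is `0`
    simp [Real.iInf_of_isEmpty, zero_rpow hq.ne']
  | inr _ =>
    refine le_ciInf fun i => le_trans ?_ (hfgh i)
    have hf₀ : 0 ≤ ⨅ i, f i := Real.iInf_nonneg hf
    have hg₀ : 0 ≤ ⨅ i, g i := Real.iInf_nonneg hg
    have hfi : ⨅ i, f i ≤ f i := ciInf_le ⟨0, forall_mem_range.2 hf⟩ i
    have hgi : ⨅ i, g i ≤ g i := ciInf_le ⟨0, forall_mem_range.2 hg⟩ i
    exact mul_le_mul (rpow_le_rpow hf₀ hfi hp) (rpow_le_rpow hg₀ hgi hq.le)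
      (rpow_nonneg hg₀ q) (rpow_nonneg (hf i) p)

theorem hsDepth_logConcave_general {n : ℕ} (μ : Measure (EuclideanSpace ℝ (Fin n)))
    (htails : ∀ ξ : EuclideanSpace ℝ (Fin n), ‖ξ‖ = 1 →
      ∀ a b : ℝ, ∀ l ∈ Set.Ioo (0 : ℝ) 1,
        (μ {y | a ≤ (inner ℝ y ξ : ℝ)}).toReal ^ (1 - l) *
          (μ {y | b ≤ (inner ℝ y ξ : ℝ)}).toReal ^ l ≤
            (μ {y | (1 - l) * a + l * b ≤ (inner ℝ y ξ : ℝ)}).toReal) :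
    ∀ x y : EuclideanSpace ℝ (Fin n), ∀ l ∈ Set.Ioo (0 : ℝ) 1,
      hsDepth μ x ^ (1 - l) * hsDepth μ y ^ l ≤ hsDepth μ ((1 - l) • x + l • y) := by
  intro x y l hl
  refine Real.iInf_rpow_mul_iInf_rpow_le (fun _ => ENNReal.toReal_nonneg)
    (fun _ => ENNReal.toReal_nonneg) (sub_nonneg.2 hl.2.le) hl.1 fun ξ => ?_
  rw [inner_add_left, real_inner_smul_left, real_inner_smul_left]
  exact htails ξ.1 ξ.2 _ _ l hl

/-- If every one-dimensional marginal tail function `x ↦ P(⟨X,ξ⟩ ≥ x)` of `μ`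
is log-concave on `ℝ`, then the half-space depth `q_μ` is log-concave on `ℝⁿ`. -/
theorem hsDepth_logConcave {n : ℕ} (μ : Measure (EuclideanSpace ℝ (Fin n)))
    [IsProbabilityMeasure μ]
    (htails : ∀ ξ : EuclideanSpace ℝ (Fin n), ‖ξ‖ = 1 →
      ∀ a b : ℝ, ∀ l ∈ Set.Ioo (0 : ℝ) 1,
        (μ {y | a ≤ (inner ℝ y ξ : ℝ)}).toReal ^ (1 - l) *
          (μ {y | b ≤ (inner ℝ y ξ : ℝ)}).toReal ^ l ≤
            (μ {y | (1 - l) * a + l * b ≤ (inner ℝ y ξ : ℝ)}).toReal) :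
    ∀ x y : EuclideanSpace ℝ (Fin n), ∀ l ∈ Set.Ioo (0 : ℝ) 1,
      hsDepth μ x ^ (1 - l) * hsDepth μ y ^ l ≤ hsDepth μ ((1 - l) • x + l • y) :=
  hsDepth_logConcave_general μ htails
end

section
/- Let f: ℝ₊ → ℝ₊ be a log-concave function and define Ψ_f(p) = (∫₀^∞ r^p f(r) dr) / Γ(p+1). Then Ψ_f is log-concave on [0, ∞). -/
/-!
Borell's comparison argument. Given `p < q`, pick `g r = c * exp (-(d * r))` with the same `p`-th
and `q`-th moments as `f`. As `log g` is affine and `f` is log-concave, `{r > 0 | g r < f r}` is an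
interval. In the variable `t = r ^ (q - p)` the weight `r ^ m`, `m = (1 - l) p + l q`, equals
`r ^ p * t ^ l` with `t ^ l` concave, so a chord, a tangent or a horizontal line of `t ^ l` yields
`α, β` with `(r ^ m - α r ^ p - β r ^ q) (f r - g r) ≥ 0` for all `r > 0`. Integrating, the `p`- and
`q`-moment terms cancel, so `∫ r ^ m g ≤ ∫ r ^ m f`. Finally `Ψ_g(s) = c d^{-(s+1)}` is exactly
log-affine in `s`, whence `Ψ_f(p)^{1-l} Ψ_f(q)^l = Ψ_g(m) ≤ Ψ_f(m)`.
-/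

open MeasureTheory Real Set

namespace ConcaveOn

variable {s : Set ℝ} {φ : ℝ → ℝ} {a b t : ℝ}

lemma le_add_mul_sub_of_hasDerivAt (hφ : ConcaveOn ℝ s φ) (ha : a ∈ s) (ht : t ∈ s) {φ' : ℝ}
    (hd : HasDerivAt φ φ' a) : φ t ≤ φ a + φ' * (t - a) := by
  rcases lt_trichotomy t a with hta | rfl | hat
  · have := hφ.le_slope_of_hasDerivAt ht ha hta hd
    rw [slope_def_field, le_div_iff₀ (sub_pos.2 hta)] at this
    linarith
  · simp
  · have := hφ.slope_le_of_hasDerivAt ha ht hat hd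
    rw [slope_def_field, div_le_iff₀ (sub_pos.2 hat)] at this
    linarith

lemma add_slope_mul_sub_le (hφ : ConcaveOn ℝ s φ) (ha : a ∈ s) (hb : b ∈ s) (ht : t ∈ s)
    (hat : a ≤ t) (htb : t ≤ b) : φ a + slope φ a b * (t - a) ≤ φ t := by
  rcases hat.eq_or_lt with rfl | hat
  · simp
  have := hφ.slope_anti ha ⟨ht, hat.ne'⟩ ⟨hb, (hat.trans_le htb).ne'⟩ htb
  rw [slope_def_field φ a t, le_div_iff₀ (sub_pos.2 hat)] at this
  linarith

lemma le_add_slope_mul_sub (hφ : ConcaveOn ℝ s φ) (ha : a ∈ s) (hb : b ∈ s) (ht : t ∈ s)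
    (hab : a < b) (htab : t ≤ a ∨ b ≤ t) : φ t ≤ φ a + slope φ a b * (t - a) := by
  rcases htab with hta | hbt
  · rcases hta.eq_or_lt with rfl | hta
    · simp
    have := hφ.slope_anti ha ⟨ht, hta.ne⟩ ⟨hb, hab.ne'⟩ (hta.trans hab).le
    rw [slope_def_field φ a t, le_div_iff_of_neg (sub_neg.2 hta)] at this
    linarith
  · have := hφ.slope_anti ha ⟨hb, hab.ne'⟩ ⟨ht, (hab.trans_le hbt).ne'⟩ hbt
    rw [slope_def_field φ a t, div_le_iff₀ (sub_pos.2 (hab.trans_le hbt))] at this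
    linarith

theorem exists_affine_separating (hφ : ConcaveOn ℝ (Ici 0) φ) (hmono : MonotoneOn φ (Ici 0))
    (hdiff : ∀ a, 0 < a → DifferentiableAt ℝ φ a) {T : Set ℝ} (hT : T.OrdConnected)
    (hT0 : T ⊆ Ioi 0) :
    ∃ α β : ℝ, ∀ t, 0 < t → (t ∈ T → α + β * t ≤ φ t) ∧ (t ∉ T → φ t ≤ α + β * t) := by
  rcases T.subsingleton_or_nontrivial with hsub | hnt
  · obtain ⟨a, ha, hTa⟩ : ∃ a, 0 < a ∧ T ⊆ {a} := by
      rcases hsub.eq_empty_or_singleton with rfl | ⟨a, rfl⟩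
      · exact ⟨1, one_pos, empty_subset _⟩
      · exact ⟨a, hT0 rfl, subset_rfl⟩
    refine ⟨φ a - deriv φ a * a, deriv φ a, fun t ht => ⟨fun htT => ?_, fun _ => ?_⟩⟩
    · rw [hTa htT]
      linarith
    · have := hφ.le_add_mul_sub_of_hasDerivAt (mem_Ici.2 ha.le) (mem_Ici.2 ht.le)
        (hdiff a ha).hasDerivAt
      linarith
  obtain ⟨x, hx, y, hy, hxy⟩ := hnt.exists_lt
  have hne : T.Nonempty := ⟨x, hx⟩
  have hbdd : BddBelow T := ⟨0, fun t ht => (hT0 ht).le⟩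
  have ha : sInf T ∈ Ici 0 := le_csInf hne fun t ht => (hT0 ht).le
  by_cases hbdd' : BddAbove T
  · set a := sInf T
    set b := sSup T
    have hab : a < b := (csInf_le hbdd hx).trans_lt (hxy.trans_le (le_csSup hbdd' hy))
    have hb : b ∈ Ici 0 := ha.trans hab.le
    refine ⟨φ a - slope φ a b * a, slope φ a b, fun t ht => ⟨fun htT => ?_, fun htT => ?_⟩⟩
    · have := hφ.add_slope_mul_sub_le ha hb (mem_Ici.2 ht.le) (csInf_le hbdd htT)
        (le_csSup hbdd' htT)
      linarith
    · have htab : t ≤ a ∨ b ≤ t := by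
        by_contra! h
        exact htT ((IsConnected.Ioo_csInf_csSup_subset ⟨hne, hT.isPreconnected⟩ hbdd hbdd') h)
      have := hφ.le_add_slope_mul_sub ha hb (mem_Ici.2 ht.le) hab htab
      linarith
  · refine ⟨φ (sInf T), 0, fun t ht => ⟨fun htT => ?_, fun htT => ?_⟩⟩
    · simpa using hmono ha (mem_Ici.2 ht.le) (csInf_le hbdd htT)
    · have hta : t ≤ sInf T := by
        by_contra! h
        exact htT (hT.isPreconnected.Ioi_csInf_subset hbdd hbdd' h)
      simpa using hmono (mem_Ici.2 ht.le) ha hta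

end ConcaveOn

theorem Set.OrdConnected.exists_rpow_combination_sign {S : Set ℝ} (hS : S.OrdConnected)
    {p q l : ℝ} (hpq : p < q) (hl : l ∈ Ioo (0 : ℝ) 1) :
    ∃ α β : ℝ, ∀ r, 0 < r →
      (r ∈ S → 0 ≤ r ^ ((1 - l) * p + l * q) - α * r ^ p - β * r ^ q) ∧
      (r ∉ S → r ^ ((1 - l) * p + l * q) - α * r ^ p - β * r ^ q ≤ 0) := by
  have hqp : q - p ≠ 0 := sub_ne_zero.2 hpq.ne'
  set T := {t : ℝ | 0 < t ∧ t ^ (q - p)⁻¹ ∈ S}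
  have hT : T.OrdConnected := by
    have he : 0 ≤ (q - p)⁻¹ := inv_nonneg.2 (sub_nonneg.2 hpq.le)
    refine ⟨fun x hx y hy t ⟨hxt, hty⟩ => ⟨hx.1.trans_le hxt, hS.out hx.2 hy.2
      ⟨rpow_le_rpow hx.1.le hxt he, rpow_le_rpow (hx.1.le.trans hxt) hty he⟩⟩⟩
  obtain ⟨α, β, hαβ⟩ := (concaveOn_rpow hl.1.le hl.2.le).exists_affine_separating
    (monotoneOn_rpow_Ici_of_exponent_nonneg hl.1.le)
    (fun a ha => (hasDerivAt_rpow_const (Or.inl ha.ne')).differentiableAt) hT fun t ht => ht.1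
  refine ⟨α, β, fun r hr => ?_⟩
  set t := r ^ (q - p)
  have ht : 0 < t := rpow_pos_of_pos hr _
  have hmemT : t ∈ T ↔ r ∈ S := by
    change 0 < t ∧ (r ^ (q - p)) ^ (q - p)⁻¹ ∈ S ↔ r ∈ S
    rw [rpow_rpow_inv hr.le hqp]
    exact and_iff_right ht
  have hweight : r ^ ((1 - l) * p + l * q) - α * r ^ p - β * r ^ q =
      r ^ p * (t ^ l - (α + β * t)) := by
    have hm : r ^ ((1 - l) * p + l * q) = r ^ p * t ^ l := by
      rw [← rpow_mul hr.le, ← rpow_add hr]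
      ring_nf
    have hq : r ^ q = r ^ p * t := by
      rw [← rpow_add hr]
      ring_nf
    rw [hm, hq]
    ring
  have hrp : 0 ≤ r ^ p := rpow_nonneg hr.le _
  rw [hweight]
  exact ⟨fun hrS => mul_nonneg hrp (sub_nonneg.2 ((hαβ t ht).1 (hmemT.2 hrS))),
    fun hrS => mul_nonpos_of_nonneg_of_nonpos hrp
      (sub_nonpos.2 ((hαβ t ht).2 (mt hmemT.1 hrS)))⟩

noncomputable def normalizedMoment (f : ℝ → ℝ) (p : ℝ) : ℝ :=
  (∫ r in Ioi 0, r ^ p * f r) / Gamma (p + 1)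

lemma normalizedMoment_nonneg {f : ℝ → ℝ} (hf0 : ∀ r, 0 < r → 0 ≤ f r) {p : ℝ} (hp : -1 < p) :
    0 ≤ normalizedMoment f p :=
  div_nonneg (setIntegral_nonneg measurableSet_Ioi fun r hr => mul_nonneg (rpow_nonneg
    (le_of_lt hr) p) (hf0 r hr)) (Gamma_pos_of_pos (by linarith)).le

lemma integrableOn_of_normalizedMoment_pos {f : ℝ → ℝ} {p : ℝ} (h : 0 < normalizedMoment f p) :
    IntegrableOn (fun r => r ^ p * f r) (Ioi 0) :=
  Integrable.of_integral_ne_zero fun h0 => by simp [normalizedMoment, h0] at h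

section ExponentialMoments

variable {c d s : ℝ}

lemma setIntegral_rpow_mul_exp_neg_mul (hs : -1 < s) (hd : 0 < d) :
    ∫ r in Ioi 0, r ^ s * exp (-(d * r)) = d⁻¹ ^ (s + 1) * Gamma (s + 1) := by
  simpa using integral_rpow_mul_exp_neg_mul_Ioi (a := s + 1) (by linarith) hd

lemma integrableOn_rpow_mul_exp_neg_mul (hs : -1 < s) (hd : 0 < d) :
    IntegrableOn (fun r => r ^ s * exp (-(d * r))) (Ioi 0) := by
  refine Integrable.of_integral_ne_zero ?_
  rw [setIntegral_rpow_mul_exp_neg_mul hs hd]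
  have := Gamma_pos_of_pos (by linarith : 0 < s + 1)
  positivity

lemma integrableOn_rpow_mul_const_mul_exp_neg_mul (hs : -1 < s) (hd : 0 < d) :
    IntegrableOn (fun r => r ^ s * (c * exp (-(d * r)))) (Ioi 0) := by
  have := (integrableOn_rpow_mul_exp_neg_mul hs hd).const_mul c
  simp only [mul_left_comm c] at this
  exact this

lemma normalizedMoment_const_mul_exp_neg_mul (hs : -1 < s) (hd : 0 < d) :
    normalizedMoment (fun r => c * exp (-(d * r))) s = c * d⁻¹ ^ (s + 1) := by
  have hΓ := (Gamma_pos_of_pos (by linarith : 0 < s + 1)).ne'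
  simp only [normalizedMoment, mul_left_comm _ c]
  rw [integral_const_mul, setIntegral_rpow_mul_exp_neg_mul hs hd]
  field_simp

lemma mul_rpow_add_one_rpow_mul_rpow {e : ℝ} (hc : 0 < c) (he : 0 < e) (p q l : ℝ) :
    (c * e ^ (p + 1)) ^ (1 - l) * (c * e ^ (q + 1)) ^ l = c * e ^ ((1 - l) * p + l * q + 1) := by
  have hexp : ∀ s, c * e ^ (s + 1) = exp (log c + (s + 1) * log e) := fun s => by
    rw [exp_add, exp_log hc, rpow_def_of_pos he, mul_comm (log e)]
  rw [hexp, hexp, hexp, ← exp_mul, ← exp_mul, ← exp_add]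
  ring_nf

lemma exists_mul_rpow_add_one_eq {p q A B : ℝ} (hpq : p ≠ q) (hA : 0 < A) (hB : 0 < B) :
    ∃ c e, 0 < c ∧ 0 < e ∧ c * e ^ (p + 1) = A ∧ c * e ^ (q + 1) = B := by
  set e := (B / A) ^ (q - p)⁻¹
  have he : 0 < e := by positivity
  refine ⟨A / e ^ (p + 1), e, by positivity, he, by field_simp, ?_⟩
  have hqp : e ^ (q + 1) = e ^ (p + 1) * (B / A) := by
    rw [← rpow_inv_rpow (div_pos hB hA).le (sub_ne_zero.2 hpq.symm), ← rpow_add he]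
    ring_nf
  rw [hqp]
  field_simp

end ExponentialMoments

lemma const_mul_exp_neg_mul_rpow_mul_rpow {c : ℝ} (hc : 0 ≤ c) (d x y μ : ℝ) :
    (c * exp (-(d * x))) ^ (1 - μ) * (c * exp (-(d * y))) ^ μ =
      c * exp (-(d * ((1 - μ) * x + μ * y))) := by
  rw [mul_rpow hc (exp_pos _).le, mul_rpow hc (exp_pos _).le, ← exp_mul, ← exp_mul,
    mul_mul_mul_comm, ← rpow_add' hc (by rw [sub_add_cancel]; exact one_ne_zero), sub_add_cancel,
    rpow_one, ← exp_add]
  ring_nf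

lemma rpow_le_rpow_add_rpow {r p q m : ℝ} (hr : 0 < r) (hpm : p ≤ m) (hmq : m ≤ q) :
    r ^ m ≤ r ^ p + r ^ q := by
  rcases le_total 1 r with h | h
  · linarith [rpow_le_rpow_of_exponent_le h hmq, rpow_nonneg hr.le p]
  · linarith [rpow_le_rpow_of_exponent_ge hr h hpm, rpow_nonneg hr.le q]

lemma integrableOn_rpow_mul_of_le_of_le {f : ℝ → ℝ} (hf0 : ∀ r, 0 < r → 0 ≤ f r) {p q m : ℝ}
    (hpm : p ≤ m) (hmq : m ≤ q) (hp : IntegrableOn (fun r => r ^ p * f r) (Ioi 0))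
    (hq : IntegrableOn (fun r => r ^ q * f r) (Ioi 0)) :
    IntegrableOn (fun r => r ^ m * f r) (Ioi 0) := by
  refine (hp.add hq).mono' ?_ ?_
  · have : (fun r => r ^ (m - p) * (r ^ p * f r)) =ᵐ[volume.restrict (Ioi 0)]
        fun r => r ^ m * f r := by
      filter_upwards [ae_restrict_mem measurableSet_Ioi] with r hr
      rw [← mul_assoc, ← rpow_add hr, sub_add_cancel]
    exact ((measurable_id.pow_const _).aestronglyMeasurable.mul hp.aestronglyMeasurable).congr this
  · filter_upwards [ae_restrict_mem measurableSet_Ioi] with r hr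
    rw [norm_of_nonneg (mul_nonneg (rpow_nonneg hr.le _) (hf0 r hr)), Pi.add_apply, ← add_mul]
    exact mul_le_mul_of_nonneg_right (rpow_le_rpow_add_rpow hr hpm hmq) (hf0 r hr)

lemma integral_mul_nonneg_of_orthogonal {α : Type*} [MeasurableSpace α] {μ : Measure α}
    {u v w h : α → ℝ} {a b : ℝ} (hu : Integrable (fun x => u x * h x) μ)
    (hv : Integrable (fun x => v x * h x) μ) (hw : Integrable (fun x => w x * h x) μ)
    (hv0 : ∫ x, v x * h x ∂μ = 0) (hw0 : ∫ x, w x * h x ∂μ = 0)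
    (hsign : ∀ᵐ x ∂μ, 0 ≤ (u x - a * v x - b * w x) * h x) :
    0 ≤ ∫ x, u x * h x ∂μ := by
  have hcomb : ∫ x, (u x - a * v x - b * w x) * h x ∂μ = ∫ x, u x * h x ∂μ := by
    simp only [sub_mul, mul_assoc]
    rw [integral_sub (f := fun x => u x * h x - a * (v x * h x)) (hu.sub (hv.const_mul a))
        (hw.const_mul b), integral_sub hu (hv.const_mul a), integral_const_mul,
      integral_const_mul, hv0, hw0]
    ring
  exact hcomb ▸ integral_nonneg_of_ae hsign

def LogConcaveOnNonneg (f : ℝ → ℝ) : Prop :=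
  ∀ x y : ℝ, 0 ≤ x → 0 ≤ y → ∀ l ∈ Ioo (0 : ℝ) 1, f x ^ (1 - l) * f y ^ l ≤ f ((1 - l) * x + l * y)

namespace LogConcaveOnNonneg

variable {f : ℝ → ℝ}

lemma ordConnected_setOf_const_mul_exp_lt (hf : LogConcaveOnNonneg f) {c : ℝ} (hc : 0 ≤ c)
    (d : ℝ) : OrdConnected {r | 0 < r ∧ c * exp (-(d * r)) < f r} := by
  refine ⟨fun x hx y hy r ⟨hxr, hry⟩ => ⟨hx.1.trans_le hxr, ?_⟩⟩
  rcases hxr.eq_or_lt with rfl | hxr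
  · exact hx.2
  rcases hry.eq_or_lt with rfl | hry
  · exact hy.2
  set μ := (r - x) / (y - x)
  have hμ : μ ∈ Ioo 0 1 :=
    ⟨div_pos (by linarith) (by linarith), (div_lt_one (by linarith)).2 (by linarith)⟩
  have hr : (1 - μ) * x + μ * y = r := by
    simp only [μ]
    field_simp [(by linarith : y - x ≠ 0)]
    ring
  calc c * exp (-(d * r))
      = (c * exp (-(d * x))) ^ (1 - μ) * (c * exp (-(d * y))) ^ μ := by
        rw [const_mul_exp_neg_mul_rpow_mul_rpow hc, hr]
    _ < f x ^ (1 - μ) * f y ^ μ :=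
        mul_lt_mul'' (rpow_lt_rpow (by positivity) hx.2 (by linarith [hμ.2]))
          (rpow_lt_rpow (by positivity) hy.2 hμ.1) (by positivity) (by positivity)
    _ ≤ f r := hr ▸ hf x y hx.1.le hy.1.le μ hμ

theorem setIntegral_rpow_mul_const_mul_exp_le (hf : LogConcaveOnNonneg f) {c d p q l : ℝ}
    (hc : 0 ≤ c) (hd : 0 < d) (hp : -1 < p) (hpq : p < q) (hl : l ∈ Ioo (0 : ℝ) 1)
    (hfp : IntegrableOn (fun r => r ^ p * f r) (Ioi 0))
    (hfq : IntegrableOn (fun r => r ^ q * f r) (Ioi 0))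
    (hfm : IntegrableOn (fun r => r ^ ((1 - l) * p + l * q) * f r) (Ioi 0))
    (hEp : ∫ r in Ioi 0, r ^ p * f r = ∫ r in Ioi 0, r ^ p * (c * exp (-(d * r))))
    (hEq : ∫ r in Ioi 0, r ^ q * f r = ∫ r in Ioi 0, r ^ q * (c * exp (-(d * r)))) :
    ∫ r in Ioi 0, r ^ ((1 - l) * p + l * q) * (c * exp (-(d * r))) ≤
      ∫ r in Ioi 0, r ^ ((1 - l) * p + l * q) * f r := by
  set g : ℝ → ℝ := fun r => c * exp (-(d * r))
  have hq : -1 < q := hp.trans hpq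
  have hm : -1 < (1 - l) * p + l * q := by nlinarith [hl.1, hl.2]
  have hsub : ∀ s : ℝ, -1 < s → IntegrableOn (fun r => r ^ s * f r) (Ioi 0) →
      IntegrableOn (fun r => r ^ s * (f r - g r)) (Ioi 0) ∧
        ∫ r in Ioi 0, r ^ s * (f r - g r) =
          (∫ r in Ioi 0, r ^ s * f r) - ∫ r in Ioi 0, r ^ s * g r := fun s hs hfs => by
    have hgs := integrableOn_rpow_mul_const_mul_exp_neg_mul (c := c) hs hd
    simp only [mul_sub]
    exact ⟨hfs.sub hgs, integral_sub hfs hgs⟩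
  set S := {r | 0 < r ∧ g r < f r}
  have hS : S.OrdConnected := hf.ordConnected_setOf_const_mul_exp_lt hc d
  obtain ⟨α, β, hαβ⟩ := hS.exists_rpow_combination_sign hpq hl
  have hsign : ∀ r, 0 < r →
      0 ≤ (r ^ ((1 - l) * p + l * q) - α * r ^ p - β * r ^ q) * (f r - g r) := by
    intro r hr
    by_cases hrS : g r < f r
    · exact mul_nonneg ((hαβ r hr).1 ⟨hr, hrS⟩) (by linarith)
    · exact mul_nonneg_of_nonpos_of_nonpos ((hαβ r hr).2 fun h => hrS h.2) (by linarith)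
  have key := integral_mul_nonneg_of_orthogonal (a := α) (b := β) (hsub _ hm hfm).1
    (hsub p hp hfp).1 (hsub q hq hfq).1 (by rw [(hsub p hp hfp).2, hEp, sub_self])
    (by rw [(hsub q hq hfq).2, hEq, sub_self])
    ((ae_restrict_mem measurableSet_Ioi).mono hsign)
  rw [(hsub _ hm hfm).2] at key
  linarith

theorem normalizedMoment_rpow_mul_rpow_le_of_lt (hf : LogConcaveOnNonneg f)
    (hf0 : ∀ r, 0 < r → 0 ≤ f r) {p q l : ℝ} (hp : -1 < p) (hpq : p < q) (hl : l ∈ Ioo (0 : ℝ) 1) :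
    normalizedMoment f p ^ (1 - l) * normalizedMoment f q ^ l ≤
      normalizedMoment f ((1 - l) * p + l * q) := by
  have hq : -1 < q := hp.trans hpq
  have hm : -1 < (1 - l) * p + l * q := by nlinarith [hl.1, hl.2]
  rcases (normalizedMoment_nonneg hf0 hp).eq_or_lt with hA | hA
  · rw [← hA, zero_rpow (by linarith [hl.2]), zero_mul]
    exact normalizedMoment_nonneg hf0 hm
  rcases (normalizedMoment_nonneg hf0 hq).eq_or_lt with hB | hB
  · rw [← hB, zero_rpow hl.1.ne', mul_zero]
    exact normalizedMoment_nonneg hf0 hm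
  obtain ⟨c, e, hc, he, hcp, hcq⟩ := exists_mul_rpow_add_one_eq hpq.ne hA hB
  have hg : ∀ s, -1 < s → normalizedMoment (fun r => c * exp (-(e⁻¹ * r))) s = c * e ^ (s + 1) :=
    fun s hs => by rw [normalizedMoment_const_mul_exp_neg_mul hs (inv_pos.2 he), inv_inv]
  have hmoment : ∀ s, -1 < s → c * e ^ (s + 1) = normalizedMoment f s →
      ∫ r in Ioi 0, r ^ s * f r = ∫ r in Ioi 0, r ^ s * (c * exp (-(e⁻¹ * r))) := fun s hs h => by
    rwa [← hg s hs, normalizedMoment, normalizedMoment,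
      div_left_inj' (Gamma_pos_of_pos (by linarith)).ne', eq_comm] at h
  have hcmp := hf.setIntegral_rpow_mul_const_mul_exp_le hc.le (inv_pos.2 he) hp hpq hl
    (integrableOn_of_normalizedMoment_pos hA) (integrableOn_of_normalizedMoment_pos hB)
    (integrableOn_rpow_mul_of_le_of_le hf0 (by nlinarith [hl.1, hl.2]) (by nlinarith [hl.1, hl.2])
      (integrableOn_of_normalizedMoment_pos hA) (integrableOn_of_normalizedMoment_pos hB))
    (hmoment p hp hcp) (hmoment q hq hcq)
  calc normalizedMoment f p ^ (1 - l) * normalizedMoment f q ^ l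
      = normalizedMoment (fun r => c * exp (-(e⁻¹ * r))) ((1 - l) * p + l * q) := by
        rw [hg _ hm, ← hcp, ← hcq, mul_rpow_add_one_rpow_mul_rpow hc he]
    _ ≤ normalizedMoment f ((1 - l) * p + l * q) :=
        div_le_div_of_nonneg_right hcmp (Gamma_pos_of_pos (by linarith)).le

end LogConcaveOnNonneg

theorem psi_logConcave_general (f : ℝ → ℝ) (hf0 : ∀ r, 0 ≤ r → 0 ≤ f r)
    (hlc : ∀ x y : ℝ, 0 ≤ x → 0 ≤ y → ∀ l ∈ Set.Ioo (0 : ℝ) 1,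
      f x ^ (1 - l) * f y ^ l ≤ f ((1 - l) * x + l * y)) :
    ∀ p q : ℝ, 0 ≤ p → 0 ≤ q → ∀ l ∈ Set.Ioo (0 : ℝ) 1,
      ((∫ r in Set.Ioi (0 : ℝ), r ^ p * f r) / Real.Gamma (p + 1)) ^ (1 - l) *
          ((∫ r in Set.Ioi (0 : ℝ), r ^ q * f r) / Real.Gamma (q + 1)) ^ l ≤
        (∫ r in Set.Ioi (0 : ℝ), r ^ ((1 - l) * p + l * q) * f r) /
          Real.Gamma ((1 - l) * p + l * q + 1) := by
  intro p q hp hq l hl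
  have hf : LogConcaveOnNonneg f := hlc
  have hf0' : ∀ r, 0 < r → 0 ≤ f r := fun r hr => hf0 r hr.le
  change normalizedMoment f p ^ (1 - l) * normalizedMoment f q ^ l ≤
    normalizedMoment f ((1 - l) * p + l * q)
  rcases lt_trichotomy p q with hpq | rfl | hqp
  · exact hf.normalizedMoment_rpow_mul_rpow_le_of_lt hf0' (by linarith) hpq hl
  · rw [← rpow_add' (normalizedMoment_nonneg hf0' (by linarith)) (by simp), sub_add_cancel,
      rpow_one, ← add_mul, sub_add_cancel, one_mul]
  · have h := hf.normalizedMoment_rpow_mul_rpow_le_of_lt hf0' (by linarith) hqp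
      (l := 1 - l) ⟨by linarith [hl.2], by linarith [hl.1]⟩
    rw [sub_sub_cancel, add_comm] at h
    rwa [mul_comm]

/-- Borell's lemma: if `f : ℝ₊ → ℝ₊` is log-concave, then
`Ψ_f(p) = (∫₀^∞ r^p f(r) dr) / Γ(p+1)` is log-concave on `[0, ∞)`. -/
theorem psi_logConcave (f : ℝ → ℝ) (hm : Measurable f) (hf0 : ∀ r, 0 ≤ r → 0 ≤ f r)
    (hlc : ∀ x y : ℝ, 0 ≤ x → 0 ≤ y → ∀ l ∈ Set.Ioo (0 : ℝ) 1,
      f x ^ (1 - l) * f y ^ l ≤ f ((1 - l) * x + l * y)) :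
    ∀ p q : ℝ, 0 ≤ p → 0 ≤ q → ∀ l ∈ Set.Ioo (0 : ℝ) 1,
      ((∫ r in Set.Ioi (0 : ℝ), r ^ p * f r) / Real.Gamma (p + 1)) ^ (1 - l) *
          ((∫ r in Set.Ioi (0 : ℝ), r ^ q * f r) / Real.Gamma (q + 1)) ^ l ≤
        (∫ r in Set.Ioi (0 : ℝ), r ^ ((1 - l) * p + l * q) * f r) /
          Real.Gamma ((1 - l) * p + l * q + 1) :=
  psi_logConcave_general f hf0 hlc
end

section
/- Let Λ(t) = −((n+1)/2) log(1 − t²/(n+1)) for |t| < √(n+1). Then its Legendre transform is Λ*(x) = ((n+1)/2) ( √(4x²/(n+1) + 1) − 1 − log( (√(4x²/(n+1)+1) + 1)/2 ) ) for all x ∈ ℝ. -/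
open Real Set

set_option maxHeartbeats 1600000 in
/-- Let `Λ(t) = −((n+1)/2) log(1 − t²/(n+1))` for `|t| < √(n+1)`. Its Legendre transform is
`Λ*(x) = ((n+1)/2) (√(4x²/(n+1)+1) − 1 − log((√(4x²/(n+1)+1)+1)/2))` for all `x ∈ ℝ`. -/
theorem legendre_exponential_marginal (n : ℕ) (x : ℝ) :
    sSup {v : ℝ | ∃ t : ℝ, |t| < Real.sqrt ((n : ℝ) + 1) ∧
        v = x * t - (-(((n : ℝ) + 1) / 2) * Real.log (1 - t ^ 2 / ((n : ℝ) + 1)))} =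
      (((n : ℝ) + 1) / 2) *
        (Real.sqrt (4 * x ^ 2 / ((n : ℝ) + 1) + 1) - 1 -
          Real.log ((Real.sqrt (4 * x ^ 2 / ((n : ℝ) + 1) + 1) + 1) / 2)) := by
  set m : ℝ := (n : ℝ) + 1 with hmdef
  have hm : (0 : ℝ) < m := by positivity
  set s : ℝ := Real.sqrt (4 * x ^ 2 / m + 1) with hsdef
  have hsnn : 0 ≤ 4 * x ^ 2 / m + 1 := by positivity
  have hs2 : s ^ 2 = 4 * x ^ 2 / m + 1 := Real.sq_sqrt hsnn
  have hs0 : 0 ≤ s := Real.sqrt_nonneg _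
  have hs1 : 1 ≤ s := by nlinarith [div_nonneg (by positivity : (0:ℝ) ≤ 4 * x ^ 2) hm.le]
  have hsp : (0 : ℝ) < s + 1 := by linarith
  have hx2 : 4 * x ^ 2 = m * (s ^ 2 - 1) := by field_simp [hm.ne'] at hs2 ⊢; linarith
  set t0 : ℝ := 2 * x / (s + 1) with ht0def
  have ht0sq : t0 ^ 2 < m := by
    have h : t0 ^ 2 * (s + 1) ^ 2 = 4 * x ^ 2 := by
      rw [ht0def]; field_simp; ring
    nlinarith [sq_nonneg (s + 1)]
  have ht0mem : |t0| < Real.sqrt m := by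
    rw [← Real.sqrt_sq_eq_abs]
    exact Real.sqrt_lt_sqrt (sq_nonneg _) ht0sq
  have h1t0 : 1 - t0 ^ 2 / m = 2 / (s + 1) := by
    rw [ht0def]; field_simp; nlinarith
  apply IsGreatest.csSup_eq
  constructor
  · refine ⟨t0, ht0mem, ?_⟩
    rw [h1t0]
    have hxt0 : x * t0 = m * (s - 1) / 2 := by
      rw [ht0def]; field_simp; nlinarith
    have hlog : Real.log (2 / (s + 1)) = -Real.log ((s + 1) / 2) := by
      rw [Real.log_div (two_ne_zero) hsp.ne', Real.log_div hsp.ne' (two_ne_zero)]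
      ring
    rw [hxt0, hlog]; ring
  · rintro v ⟨t, ht, rfl⟩
    have ht2 : t ^ 2 < m := by
      have h := mul_self_lt_mul_self (abs_nonneg t) ht
      rw [abs_mul_abs_self, Real.mul_self_sqrt hm.le] at h
      nlinarith
    have hy : 0 < 1 - t ^ 2 / m := by
      rw [sub_pos, div_lt_one hm]; exact ht2
    have hprod : 0 < (1 - t ^ 2 / m) * ((s + 1) / 2) := by positivity
    have hlog1 := Real.log_le_sub_one_of_pos hprod
    have hlogmul : Real.log ((1 - t ^ 2 / m) * ((s + 1) / 2)) =
        Real.log (1 - t ^ 2 / m) + Real.log ((s + 1) / 2) := by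
      rw [Real.log_mul hy.ne' (by positivity)]
    rw [hlogmul] at hlog1
    -- log(1-t²/m) ≤ (1-t²/m)(s+1)/2 - 1 - log((s+1)/2)
    have key : x * t + m / 2 * ((1 - t ^ 2 / m) * ((s + 1) / 2) - 1) ≤
        m / 2 * (s - 1) := by
      have heq : m / 2 * ((1 - t ^ 2 / m) * ((s + 1) / 2) - 1) =
          (m - t ^ 2) * (s + 1) / 4 - m / 2 := by
        field_simp; ring
      rw [heq]
      have key2 : (s + 1) * ((m - t ^ 2) * (s + 1) + 4 * (x * t)) ≤
          (s + 1) * (2 * m * s) := by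
        nlinarith [sq_nonneg (t * (s + 1) - 2 * x), hx2]
      have key0 := le_of_mul_le_mul_left key2 hsp
      nlinarith [key0]
    have hhalf : (0 : ℝ) < m / 2 := by linarith
    have hL : Real.log (1 - t ^ 2 / m) ≤
        (1 - t ^ 2 / m) * ((s + 1) / 2) - 1 - Real.log ((s + 1) / 2) := by linarith
    have h2 := mul_le_mul_of_nonneg_left hL hhalf.le
    linarith [h2, key]
end

section
/- Let Λ be a smooth strictly convex even function on an interval (−t*, t*) with Λ(0)=0, Λ' a strictly increasing bijection onto (−x*, x*), and let Λ* be its Legendre transform. If t ↦ Λ(√t) is convex on (0, t*²), then x ↦ Λ*(√x) is concave on (0, x*²); if t ↦ Λ(√t) is concave, then x ↦ Λ*(√x) is convex. -/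
open Real Set

/-- The symmetric interval `(−t*, t*)` in `ℝ`, with endpoint `t* ∈ (0, ∞]` an `EReal`. -/
def symInterval (tstar : EReal) : Set ℝ := {t : ℝ | ((|t| : ℝ) : EReal) < tstar}

/-- The Legendre transform of `Λ` restricted to the interval `(−t*, t*)`. -/
noncomputable def legendreOn (tstar : EReal) (Λ : ℝ → ℝ) (x : ℝ) : ℝ :=
  sSup {v : ℝ | ∃ t ∈ symInterval tstar, v = x * t - Λ t}

lemma isOpen_symInterval (c : EReal) : IsOpen (symInterval c) := by
  have : symInterval c = (fun t : ℝ => ((|t| : ℝ) : EReal)) ⁻¹' (Iio c) := rfl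
  rw [this]
  exact IsOpen.preimage (continuous_coe_real_ereal.comp continuous_abs) isOpen_Iio

lemma mem_symInterval {c : EReal} {t : ℝ} : t ∈ symInterval c ↔ ((|t| : ℝ) : EReal) < c :=
  Iff.rfl

lemma mem_symInterval_of_nonneg {c : EReal} {t : ℝ} (h0 : 0 ≤ t) :
    t ∈ symInterval c ↔ ((t : ℝ) : EReal) < c := by
  rw [mem_symInterval, abs_of_nonneg h0]

lemma zero_mem_symInterval {c : EReal} (hc : 0 < c) : (0 : ℝ) ∈ symInterval c := by
  simpa [mem_symInterval] using hc

lemma sq_lt_mul_self {c : EReal} (hc : 0 < c) {t : ℝ} (h0 : 0 ≤ t) (h : (t : EReal) < c) :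
    ((t * t : ℝ) : EReal) < c * c := by
  induction c with
  | bot => exact absurd hc (by simp)
  | coe r =>
      rw [← EReal.coe_mul, EReal.coe_lt_coe_iff]
      have ht : t < r := EReal.coe_lt_coe_iff.mp h
      nlinarith
  | top =>
      rw [EReal.top_mul_top]
      exact EReal.coe_lt_top _

lemma sqrt_lt_of_lt_mul_self {c : EReal} (hc : 0 < c) {x : ℝ}
    (h : ((x : ℝ) : EReal) < c * c) : ((Real.sqrt x : ℝ) : EReal) < c := by
  induction c with
  | bot => exact absurd hc (by simp)
  | coe r =>
      have hr : 0 < r := by exact_mod_cast hc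
      rw [← EReal.coe_mul, EReal.coe_lt_coe_iff] at h
      rw [EReal.coe_lt_coe_iff, Real.sqrt_lt' hr]
      nlinarith
  | top => exact EReal.coe_lt_top _

set_option maxHeartbeats 1000000 in
/-- Let `Λ` be a smooth strictly convex even function on `(−t*, t*)` with `Λ(0) = 0` and
`Λ'` a strictly increasing bijection onto `(−x*, x*)`, and let `Λ*` be its Legendre
transform. If `t ↦ Λ(√t)` is convex on `(0, t*²)`, then `x ↦ Λ*(√x)` is concave on
`(0, x*²)`; if `t ↦ Λ(√t)` is concave, then `x ↦ Λ*(√x)` is convex. -/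
theorem legendre_sqrt_convexity (tstar xstar : EReal) (htpos : 0 < tstar)
    (hxpos : 0 < xstar) (Λ : ℝ → ℝ)
    (hsmooth : ContDiffOn ℝ (⊤ : ℕ∞) Λ (symInterval tstar))
    (hconv : StrictConvexOn ℝ (symInterval tstar) Λ)
    (heven : ∀ t ∈ symInterval tstar, Λ (-t) = Λ t)
    (hzero : Λ 0 = 0)
    (hmono : StrictMonoOn (deriv Λ) (symInterval tstar))
    (hsurj : deriv Λ '' symInterval tstar = symInterval xstar) :
    (ConvexOn ℝ {t : ℝ | 0 < t ∧ ((t : ℝ) : EReal) < tstar * tstar}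
        (fun t => Λ (Real.sqrt t)) →
      ConcaveOn ℝ {x : ℝ | 0 < x ∧ ((x : ℝ) : EReal) < xstar * xstar}
        (fun x => legendreOn tstar Λ (Real.sqrt x))) ∧
    (ConcaveOn ℝ {t : ℝ | 0 < t ∧ ((t : ℝ) : EReal) < tstar * tstar}
        (fun t => Λ (Real.sqrt t)) →
      ConvexOn ℝ {x : ℝ | 0 < x ∧ ((x : ℝ) : EReal) < xstar * xstar}
        (fun x => legendreOn tstar Λ (Real.sqrt x))) := by
  set SI := symInterval tstar with hSI
  set Dt := {t : ℝ | 0 < t ∧ ((t : ℝ) : EReal) < tstar * tstar} with hDt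
  set Dx := {x : ℝ | 0 < x ∧ ((x : ℝ) : EReal) < xstar * xstar} with hDx
  have hopen : IsOpen SI := isOpen_symInterval tstar
  have h0SI : (0 : ℝ) ∈ SI := zero_mem_symInterval htpos
  have hdiff : ∀ t ∈ SI, HasDerivAt Λ (deriv Λ t) t := by
    intro t ht
    exact ((hsmooth.differentiableOn (by simp)).differentiableAt
      (hopen.mem_nhds ht)).hasDerivAt
  have hconv' : ConvexOn ℝ SI Λ := hconv.convexOn
  -- derivative at 0 is 0
  have hd0 : deriv Λ 0 = 0 := by
    have hev : (fun t => Λ (-t)) =ᶠ[nhds (0 : ℝ)] Λ := by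
      have hmem : ∀ᶠ t in nhds (0 : ℝ), t ∈ SI := hopen.eventually_mem h0SI
      filter_upwards [hmem] with t ht using heven t ht
    have h1 : HasDerivAt (fun t => Λ (-t)) (deriv Λ 0 * (-1)) 0 := by
      have hneg : HasDerivAt (fun t : ℝ => -t) (-1) (0 : ℝ) := hasDerivAt_neg 0
      have hL : HasDerivAt Λ (deriv Λ 0) ((fun t : ℝ => -t) 0) := by
        simpa using hdiff 0 h0SI
      exact hL.comp (0 : ℝ) hneg
    have h2 : deriv (fun t => Λ (-t)) 0 = deriv Λ 0 * (-1) := h1.deriv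
    have h3 : deriv (fun t => Λ (-t)) 0 = deriv Λ 0 := hev.deriv_eq
    linarith [h2, h3]
  -- tangent line inequality
  have tangent : ∀ t ∈ SI, ∀ u ∈ SI, deriv Λ t * (u - t) ≤ Λ u - Λ t := by
    intro t ht u hu
    rcases lt_trichotomy t u with h | h | h
    · have h1 := hconv'.deriv_le_slope ht hu h ((hdiff t ht).differentiableAt)
      rw [slope_def_field] at h1
      have hut : 0 < u - t := by linarith
      have h2 := mul_le_mul_of_nonneg_right h1 hut.le
      rw [div_mul_cancel₀ _ hut.ne'] at h2
      linarith
    · subst h; simp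
    · have h1 := hconv'.slope_le_deriv hu ht h ((hdiff t ht).differentiableAt)
      rw [slope_def_field] at h1
      have htu : 0 < t - u := by linarith
      have h2 := mul_le_mul_of_nonneg_right h1 htu.le
      rw [div_mul_cancel₀ _ htu.ne'] at h2
      nlinarith
  -- key: optimizer data for every x in Dx
  have key : ∀ x ∈ Dx, ∃ t, t ∈ SI ∧ 0 < t ∧ deriv Λ t = Real.sqrt x ∧
      (∀ u ∈ SI, Real.sqrt x * u - Λ u ≤ Real.sqrt x * t - Λ t) ∧
      legendreOn tstar Λ (Real.sqrt x) = Real.sqrt x * t - Λ t := by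
    intro x hx
    obtain ⟨hxpos', hxlt⟩ := hx
    have hsx : 0 < Real.sqrt x := Real.sqrt_pos.mpr hxpos'
    have hsxSI : Real.sqrt x ∈ symInterval xstar := by
      rw [mem_symInterval_of_nonneg (Real.sqrt_nonneg x)]
      exact sqrt_lt_of_lt_mul_self hxpos hxlt
    rw [← hsurj] at hsxSI
    obtain ⟨t, htSI, hdt⟩ := hsxSI
    have htpos' : 0 < t := by
      by_contra hle
      push_neg at hle
      have hle2 : deriv Λ t ≤ deriv Λ 0 := by
        rcases hle.eq_or_lt with rfl | hlt
        · exact le_refl _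
        · exact (hmono htSI h0SI hlt).le
      rw [hd0, hdt] at hle2
      linarith
    have hub : ∀ u ∈ SI, Real.sqrt x * u - Λ u ≤ Real.sqrt x * t - Λ t := by
      intro u hu
      have h1 := tangent t htSI u hu
      rw [hdt] at h1
      nlinarith
    refine ⟨t, htSI, htpos', hdt, hub, ?_⟩
    apply IsGreatest.csSup_eq
    constructor
    · exact ⟨t, htSI, rfl⟩
    · rintro v ⟨u, hu, rfl⟩
      exact hub u hu
  -- convexity of Dx
  have hDxconv : Convex ℝ Dx := by
    intro a ha b hb p q hp hq hpq
    obtain ⟨hapos, halt⟩ := ha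
    obtain ⟨hbpos, hblt⟩ := hb
    simp only [smul_eq_mul]
    constructor
    · show 0 < p * a + q * b
      have hmin : 0 < min a b := lt_min hapos hbpos
      have h1 : p * min a b ≤ p * a := mul_le_mul_of_nonneg_left (min_le_left _ _) hp
      have h2 : q * min a b ≤ q * b := mul_le_mul_of_nonneg_left (min_le_right _ _) hq
      nlinarith
    · show ((p * a + q * b : ℝ) : EReal) < xstar * xstar
      have hle : p * a + q * b ≤ max a b := by
        have h1 : p * a ≤ p * max a b := mul_le_mul_of_nonneg_left (le_max_left _ _) hp
        have h2 : q * b ≤ q * max a b := mul_le_mul_of_nonneg_left (le_max_right _ _) hq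
        have h3 : p * max a b + q * max a b = max a b := by rw [← add_mul, hpq, one_mul]
        linarith
      calc ((p * a + q * b : ℝ) : EReal) ≤ ((max a b : ℝ) : EReal) :=
            EReal.coe_le_coe_iff.mpr hle
        _ < xstar * xstar := by
            rcases max_cases a b with ⟨h, _⟩ | ⟨h, _⟩ <;> rw [h]
            exacts [halt, hblt]
  constructor
  · -- g convex → h concave
    intro hg
    refine ⟨hDxconv, ?_⟩
    intro x1 hx1 x2 hx2 p q hp hq hpq
    have hx : p • x1 + q • x2 ∈ Dx := hDxconv hx1 hx2 hp hq hpq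
    set x := p • x1 + q • x2 with hxdef
    simp only [smul_eq_mul] at hxdef
    obtain ⟨t1, ht1SI, ht1pos, hd1, hub1, hv1⟩ := key x1 hx1
    obtain ⟨t2, ht2SI, ht2pos, hd2, hub2, hv2⟩ := key x2 hx2
    obtain ⟨s, hsSI, hspos, hds, hubs, hvs⟩ := key x hx
    set a := Real.sqrt x1 with hadef
    set b := Real.sqrt x2 with hbdef
    set c := Real.sqrt x with hcdef
    have ha2 : a ^ 2 = x1 := Real.sq_sqrt hx1.1.le
    have hb2 : b ^ 2 = x2 := Real.sq_sqrt hx2.1.le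
    have hc2 : c ^ 2 = x := Real.sq_sqrt hx.1.le
    have hapos : 0 < a := Real.sqrt_pos.mpr hx1.1
    have hbpos : 0 < b := Real.sqrt_pos.mpr hx2.1
    have hcpos : 0 < c := Real.sqrt_pos.mpr hx.1
    set t := Real.sqrt (p * t1 ^ 2 + q * t2 ^ 2) with htdef
    have htnn : 0 ≤ p * t1 ^ 2 + q * t2 ^ 2 := by positivity
    have ht2 : t ^ 2 = p * t1 ^ 2 + q * t2 ^ 2 := Real.sq_sqrt htnn
    have htnn' : 0 ≤ t := Real.sqrt_nonneg _
    have ht1lt : ((t1 : ℝ) : EReal) < tstar := (mem_symInterval_of_nonneg ht1pos.le).mp ht1SI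
    have ht2lt : ((t2 : ℝ) : EReal) < tstar := (mem_symInterval_of_nonneg ht2pos.le).mp ht2SI
    have htmax : t ≤ max t1 t2 := by
      have h1 : t1 ≤ max t1 t2 := le_max_left _ _
      have h2 : t2 ≤ max t1 t2 := le_max_right _ _
      have hm : 0 ≤ max t1 t2 := le_trans ht1pos.le h1
      rw [htdef, show max t1 t2 = Real.sqrt ((max t1 t2) ^ 2) from (Real.sqrt_sq hm).symm]
      apply Real.sqrt_le_sqrt
      have h1' : p * t1 ^ 2 ≤ p * (max t1 t2) ^ 2 := by
        apply mul_le_mul_of_nonneg_left _ hp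
        nlinarith
      have h2' : q * t2 ^ 2 ≤ q * (max t1 t2) ^ 2 := by
        apply mul_le_mul_of_nonneg_left _ hq
        nlinarith
      nlinarith
    have htSI : t ∈ SI := by
      rw [hSI, mem_symInterval_of_nonneg htnn']
      calc ((t : ℝ) : EReal) ≤ ((max t1 t2 : ℝ) : EReal) := EReal.coe_le_coe_iff.mpr htmax
        _ < tstar := by
            rcases max_cases t1 t2 with ⟨h, _⟩ | ⟨h, _⟩ <;> rw [h]
            exacts [ht1lt, ht2lt]
    -- Λ t ≤ p Λ t1 + q Λ t2 from convexity of g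
    have ht1Dt : t1 ^ 2 ∈ Dt := by
      refine ⟨by positivity, ?_⟩
      rw [sq]
      exact sq_lt_mul_self htpos ht1pos.le ht1lt
    have ht2Dt : t2 ^ 2 ∈ Dt := by
      refine ⟨by positivity, ?_⟩
      rw [sq]
      exact sq_lt_mul_self htpos ht2pos.le ht2lt
    have hgc := hg.2 ht1Dt ht2Dt hp hq hpq
    simp only [smul_eq_mul] at hgc
    rw [Real.sqrt_sq ht1pos.le, Real.sqrt_sq ht2pos.le] at hgc
    have hΛt : Λ t ≤ p * Λ t1 + q * Λ t2 := by rwa [← htdef] at hgc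
    -- Cauchy-Schwarz
    have hCS : p * (a * t1) + q * (b * t2) ≤ c * t := by
      set L := p * (a * t1) + q * (b * t2) with hLdef
      have hLnn : 0 ≤ L := by positivity
      have hsq : L ^ 2 ≤ (c * t) ^ 2 := by
        have hexp : (c * t) ^ 2 = (p * a ^ 2 + q * b ^ 2) * (p * t1 ^ 2 + q * t2 ^ 2) := by
          rw [mul_pow, hc2, ht2, hxdef, ha2, hb2]
        rw [hexp, hLdef]
        nlinarith [mul_nonneg hp hq, sq_nonneg (a * t2 - b * t1)]
      have hctnn : 0 ≤ c * t := by positivity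
      nlinarith
    -- lower bound for h(x)
    have hlb : c * t - Λ t ≤ legendreOn tstar Λ c := by
      rw [hvs]
      exact hubs t htSI
    show p • legendreOn tstar Λ a + q • legendreOn tstar Λ b ≤ legendreOn tstar Λ c
    simp only [smul_eq_mul]
    rw [hv1, hv2]
    have hexp : p * (a * t1 - Λ t1) + q * (b * t2 - Λ t2)
        = (p * (a * t1) + q * (b * t2)) - (p * Λ t1 + q * Λ t2) := by ring
    linarith [hexp.le, hexp.ge]
  · -- g concave → h convex
    intro hg
    refine ⟨hDxconv, ?_⟩
    intro x1 hx1 x2 hx2 p q hp hq hpq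
    have hx : p • x1 + q • x2 ∈ Dx := hDxconv hx1 hx2 hp hq hpq
    set x := p • x1 + q • x2 with hxdef
    simp only [smul_eq_mul] at hxdef
    -- ratio monotonicity: r ↦ Λ'(r)/r antitone
    have hratio : ∀ r1 r2 : ℝ, 0 < r1 → r1 ≤ r2 → r2 ∈ SI →
        deriv Λ r2 * r1 ≤ deriv Λ r1 * r2 := by
      intro r1 r2 hr1 hr12 hr2SI
      rcases eq_or_lt_of_le hr12 with rfl | hlt
      · exact le_refl _
      · have hr2 : 0 < r2 := lt_trans hr1 hlt
        have hr2lt : ((r2 : ℝ) : EReal) < tstar := (mem_symInterval_of_nonneg hr2.le).mp hr2SI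
        have hr1SI : r1 ∈ SI := by
          rw [hSI, mem_symInterval_of_nonneg hr1.le]
          exact lt_trans (EReal.coe_lt_coe_iff.mpr hlt) hr2lt
        have hr1lt : ((r1 : ℝ) : EReal) < tstar := (mem_symInterval_of_nonneg hr1.le).mp hr1SI
        have hu1 : r1 ^ 2 ∈ Dt := by
          refine ⟨by positivity, ?_⟩
          rw [sq]; exact sq_lt_mul_self htpos hr1.le hr1lt
        have hu2 : r2 ^ 2 ∈ Dt := by
          refine ⟨by positivity, ?_⟩
          rw [sq]; exact sq_lt_mul_self htpos hr2.le hr2lt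
        have hder : ∀ r : ℝ, 0 < r → r ∈ SI →
            HasDerivAt (fun u => Λ (Real.sqrt u)) (deriv Λ r * (1 / (2 * r))) (r ^ 2) := by
          intro r hr hrSI
          have hrs : Real.sqrt (r ^ 2) = r := Real.sqrt_sq hr.le
          have hs : HasDerivAt Real.sqrt (1 / (2 * Real.sqrt (r ^ 2))) (r ^ 2) :=
            Real.hasDerivAt_sqrt (by positivity)
          have hL : HasDerivAt Λ (deriv Λ r) (Real.sqrt (r ^ 2)) := by
            rw [hrs]; exact hdiff r hrSI
          have := hL.comp (r ^ 2) hs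
          simpa [hrs, Function.comp_def] using this
        have hd1 := hder r1 hr1 hr1SI
        have hd2 := hder r2 hr2 hr2SI
        have hsqlt : r1 ^ 2 < r2 ^ 2 := by nlinarith
        have hc1 : slope (fun u => Λ (Real.sqrt u)) (r1 ^ 2) (r2 ^ 2)
            ≤ deriv Λ r1 * (1 / (2 * r1)) := hg.slope_le_of_hasDerivAt hu1 hu2 hsqlt hd1
        have hc2 : deriv Λ r2 * (1 / (2 * r2))
            ≤ slope (fun u => Λ (Real.sqrt u)) (r1 ^ 2) (r2 ^ 2) :=
          hg.le_slope_of_hasDerivWithinAt_Iio hu1 hu2 hsqlt hd2.hasDerivWithinAt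
        have hfinal : deriv Λ r2 * (1 / (2 * r2)) ≤ deriv Λ r1 * (1 / (2 * r1)) :=
          le_trans hc2 hc1
        rw [mul_one_div, mul_one_div, div_le_div_iff₀ (by positivity) (by positivity)] at hfinal
        nlinarith
    obtain ⟨t, htSI, htpos', hdt, hubt, hvt⟩ := key x hx
    obtain ⟨s1, hs1SI, hs1pos, hds1, hub1, hv1⟩ := key x1 hx1
    obtain ⟨s2, hs2SI, hs2pos, hds2, hub2, hv2⟩ := key x2 hx2
    set a := Real.sqrt x1 with hadef
    set b := Real.sqrt x2 with hbdef
    set c := Real.sqrt x with hcdef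
    have ha2 : a ^ 2 = x1 := Real.sq_sqrt hx1.1.le
    have hb2 : b ^ 2 = x2 := Real.sq_sqrt hx2.1.le
    have hc2 : c ^ 2 = x := Real.sq_sqrt hx.1.le
    have hapos : 0 < a := Real.sqrt_pos.mpr hx1.1
    have hbpos : 0 < b := Real.sqrt_pos.mpr hx2.1
    have hcpos : 0 < c := Real.sqrt_pos.mpr hx.1
    -- scaled points
    set t1 := t * a / c with ht1def
    set t2 := t * b / c with ht2def
    have ht1pos : 0 < t1 := by rw [ht1def]; positivity
    have ht2pos : 0 < t2 := by rw [ht2def]; positivity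
    -- bound: t * w / c ∈ SI for w = sqrt xi with optimizer si
    have hbnd : ∀ (w si : ℝ), 0 < w → si ∈ SI → 0 < si → deriv Λ si = w →
        t * w / c ∈ SI := by
      intro w si hw hsiSI hsipos hdsi
      have hwc : 0 < t * w / c := by positivity
      rw [hSI, mem_symInterval_of_nonneg hwc.le]
      rcases le_or_gt w c with h | h
      · have hle : t * w / c ≤ t := by
          rw [div_le_iff₀ hcpos]
          nlinarith
        calc ((t * w / c : ℝ) : EReal) ≤ ((t : ℝ) : EReal) := EReal.coe_le_coe_iff.mpr hle
          _ < tstar := (mem_symInterval_of_nonneg htpos'.le).mp htSI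
      · -- c < w, so t < si and t*w ≤ c*si by ratio monotonicity
        have htsi : t < si := by
          by_contra hcon
          push_neg at hcon
          have : deriv Λ si ≤ deriv Λ t := by
            rcases eq_or_lt_of_le hcon with rfl | hlt
            · exact le_refl _
            · exact (hmono hsiSI htSI hlt).le
          rw [hdsi, hdt] at this
          linarith
        have hr := hratio t si htpos' htsi.le hsiSI
        rw [hdsi, hdt] at hr
        -- hr : w * t ≤ c * si
        have hle : t * w / c ≤ si := by
          rw [div_le_iff₀ hcpos]
          nlinarith
        calc ((t * w / c : ℝ) : EReal) ≤ ((si : ℝ) : EReal) := EReal.coe_le_coe_iff.mpr hle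
          _ < tstar := (mem_symInterval_of_nonneg hsipos.le).mp hsiSI
    have ht1SI : t1 ∈ SI := hbnd a s1 hapos hs1SI hs1pos hds1
    have ht2SI : t2 ∈ SI := hbnd b s2 hbpos hs2SI hs2pos hds2
    have ht1lt : ((t1 : ℝ) : EReal) < tstar := (mem_symInterval_of_nonneg ht1pos.le).mp ht1SI
    have ht2lt : ((t2 : ℝ) : EReal) < tstar := (mem_symInterval_of_nonneg ht2pos.le).mp ht2SI
    have ht1Dt : t1 ^ 2 ∈ Dt := by
      refine ⟨by positivity, ?_⟩
      rw [sq]; exact sq_lt_mul_self htpos ht1pos.le ht1lt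
    have ht2Dt : t2 ^ 2 ∈ Dt := by
      refine ⟨by positivity, ?_⟩
      rw [sq]; exact sq_lt_mul_self htpos ht2pos.le ht2lt
    -- key algebraic identities
    have habc : p * a ^ 2 + q * b ^ 2 = c ^ 2 := by rw [ha2, hb2, hc2, hxdef]
    have hsum : p * t1 ^ 2 + q * t2 ^ 2 = t ^ 2 := by
      have h1 : p * t1 ^ 2 + q * t2 ^ 2 = t ^ 2 * (p * a ^ 2 + q * b ^ 2) / c ^ 2 := by
        rw [ht1def, ht2def]; field_simp
      rw [h1, habc]
      field_simp
    have hlin : p * (a * t1) + q * (b * t2) = c * t := by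
      have h1 : p * (a * t1) + q * (b * t2) = t * (p * a ^ 2 + q * b ^ 2) / c := by
        rw [ht1def, ht2def]; field_simp
      rw [h1, habc]
      field_simp
    -- concavity of g gives p Λ t1 + q Λ t2 ≤ Λ t
    have hgc := hg.2 ht1Dt ht2Dt hp hq hpq
    simp only [smul_eq_mul] at hgc
    rw [Real.sqrt_sq ht1pos.le, Real.sqrt_sq ht2pos.le] at hgc
    have hΛt : p * Λ t1 + q * Λ t2 ≤ Λ t := by
      have hts : Real.sqrt (p * t1 ^ 2 + q * t2 ^ 2) = t := by
        rw [hsum]; exact Real.sqrt_sq htpos'.le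
      rwa [hts] at hgc
    -- upper bounds for the two Legendre values
    have hle1 : a * t1 - Λ t1 ≤ legendreOn tstar Λ a := by
      rw [hv1]; exact hub1 t1 ht1SI
    have hle2 : b * t2 - Λ t2 ≤ legendreOn tstar Λ b := by
      rw [hv2]; exact hub2 t2 ht2SI
    show legendreOn tstar Λ c ≤ p • legendreOn tstar Λ a + q • legendreOn tstar Λ b
    simp only [smul_eq_mul]
    rw [hvt]
    have h1 : p * (a * t1 - Λ t1) ≤ p * legendreOn tstar Λ a :=
      mul_le_mul_of_nonneg_left hle1 hp
    have h2 : q * (b * t2 - Λ t2) ≤ q * legendreOn tstar Λ b :=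
      mul_le_mul_of_nonneg_left hle2 hq
    have hexp : p * (a * t1 - Λ t1) + q * (b * t2 - Λ t2)
        = (p * (a * t1) + q * (b * t2)) - (p * Λ t1 + q * Λ t2) := by ring
    rw [hlin] at hexp
    linarith
end

section
/- Let φ(t) = E e^{t θ₁}, where θ is uniformly distributed on the unit sphere S^{n−1} in ℝⁿ (n ≥ 2). Then φ′(t) ≤ t φ″(t) for every t > 0. -/
open MeasureTheory ProbabilityTheory Real Set

/-! Write `X = θ₁`. Differentiating under the integral, `φ'(t) = E[X e^{tX}]` and
`φ''(t) = E[X² e^{tX}]`. Invariance of `σ` under `-id` makes the law of `X` symmetric, so both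
expectations may be symmetrised: `φ'(t) = E[X sinh(tX)]` and `φ''(t) = E[X² cosh(tX)]`. The
theorem then follows from the pointwise inequality `x sinh(tx) ≤ t x² cosh(tx)` for `t ≥ 0`,
which is `tanh u ≤ u` for `u ≥ 0`. -/

namespace Real

theorem sinh_le_mul_cosh {u : ℝ} (hu : 0 ≤ u) : sinh u ≤ u * cosh u := by
  have hderiv (x : ℝ) : HasDerivAt (fun x => x * cosh x - sinh x) (x * sinh x) x :=
    (((hasDerivAt_id' x).mul (hasDerivAt_cosh x)).sub (hasDerivAt_sinh x)).congr_deriv (by ring)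
  have hmono : MonotoneOn (fun x => x * cosh x - sinh x) (Ici 0) := by
    refine monotoneOn_of_hasDerivWithinAt_nonneg (convex_Ici 0) ?_
      (fun x _ => (hderiv x).hasDerivWithinAt) fun x hx => ?_
    · exact (continuous_id.mul continuous_cosh |>.sub continuous_sinh).continuousOn
    · rw [interior_Ici] at hx
      exact mul_nonneg hx.le (sinh_nonneg_iff.2 hx.le)
  simpa using hmono self_mem_Ici hu hu

theorem mul_sinh_mul_le {t : ℝ} (ht : 0 ≤ t) (x : ℝ) :
    x * sinh (t * x) ≤ t * x ^ 2 * cosh (t * x) := by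
  rcases le_total 0 x with hx | hx
  · have := mul_le_mul_of_nonneg_left (sinh_le_mul_cosh (mul_nonneg ht hx)) hx
    linarith
  · have := mul_le_mul_of_nonneg_left
      (sinh_le_mul_cosh (mul_nonneg ht (neg_nonneg.2 hx))) (neg_nonneg.2 hx)
    rw [mul_neg, sinh_neg, cosh_neg] at this
    linarith

end Real

namespace ProbabilityTheory

theorem identDistrib_neg_of_map_neg_eq {E : Type*} [MeasurableSpace E] [InvolutiveNeg E]
    [MeasurableNeg E] {μ : Measure E} (hμ : μ.map Neg.neg = μ) {f : E → ℝ}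
    (hf : Measurable f) (hodd : ∀ x, f (-x) = -f x) :
    IdentDistrib f (-f) μ μ where
  aemeasurable_fst := hf.aemeasurable
  aemeasurable_snd := hf.neg.aemeasurable
  map_eq := by
    have : -f = f ∘ Neg.neg := funext fun x => (hodd x).symm
    rw [this, ← Measure.map_map hf measurable_neg, hμ]

variable {Ω : Type*} {m : MeasurableSpace Ω} {μ : Measure Ω} {X : Ω → ℝ}

theorem IdentDistrib.integral_comp_le_of_add_comp_neg_le (hX : IdentDistrib X (-X) μ μ)
    {f g : ℝ → ℝ} (hf : Measurable f) (hg : Measurable g)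
    (hfX : Integrable (fun ω => f (X ω)) μ) (hgX : Integrable (fun ω => g (X ω)) μ)
    (hle : ∀ x, f x + f (-x) ≤ g x + g (-x)) :
    ∫ ω, f (X ω) ∂μ ≤ ∫ ω, g (X ω) ∂μ := by
  have hfX' : Integrable (fun ω => f (-X ω)) μ := (hX.comp hf).integrable_iff.1 hfX
  have hgX' : Integrable (fun ω => g (-X ω)) μ := (hX.comp hg).integrable_iff.1 hgX
  have hsum : ∫ ω, f (X ω) + f (-X ω) ∂μ ≤ ∫ ω, g (X ω) + g (-X ω) ∂μ :=
    integral_mono (hfX.add hfX') (hgX.add hgX') fun ω => hle (X ω)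
  have hf_symm : ∫ ω, f (-X ω) ∂μ = ∫ ω, f (X ω) ∂μ := (hX.comp hf).integral_eq.symm
  have hg_symm : ∫ ω, g (-X ω) ∂μ = ∫ ω, g (X ω) ∂μ := (hX.comp hg).integral_eq.symm
  rw [integral_add hfX hfX', integral_add hgX hgX', hf_symm, hg_symm] at hsum
  linarith

theorem deriv_mgf_le_mul_deriv_deriv_mgf (hX : IdentDistrib X (-X) μ μ) {t : ℝ}
    (ht : t ∈ interior (integrableExpSet X μ)) (ht0 : 0 ≤ t) :
    deriv (mgf X μ) t ≤ t * deriv (deriv (mgf X μ)) t := by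
  rw [deriv_mgf ht, ← iteratedDeriv_one, ← iteratedDeriv_succ', iteratedDeriv_mgf ht,
    ← integral_const_mul]
  refine hX.integral_comp_le_of_add_comp_neg_le (f := fun x => x * exp (t * x))
    (g := fun x => t * (x ^ 2 * exp (t * x))) (by fun_prop) (by fun_prop) ?_
    ((integrable_pow_mul_exp_of_mem_interior_integrableExpSet ht 2).const_mul t) fun x => ?_
  · simpa using integrable_pow_mul_exp_of_mem_interior_integrableExpSet ht 1
  · have := mul_sinh_mul_le ht0 x
    rw [sinh_eq, cosh_eq] at this
    simp only [mul_neg, neg_sq]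
    linarith

end ProbabilityTheory

theorem EuclideanSpace.ae_apply_mem_Icc_of_measure_sphere {ι : Type*} [Fintype ι]
    {μ : Measure (EuclideanSpace ℝ ι)} [IsProbabilityMeasure μ]
    (hμ : μ (Metric.sphere 0 1) = 1) (i : ι) : ∀ᵐ y ∂μ, y i ∈ Icc (-1) 1 := by
  have hsphere : ∀ᵐ y ∂μ, y ∈ Metric.sphere (0 : EuclideanSpace ℝ ι) 1 := by
    rw [ae_mem_iff_measure_eq Metric.isClosed_sphere.measurableSet.nullMeasurableSet, hμ,
      measure_univ]
  filter_upwards [hsphere] with y hy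
  rw [mem_sphere_zero_iff_norm] at hy
  exact abs_le.1 (hy ▸ PiLp.norm_apply_le y i)

/-- Let `θ` be uniformly distributed on the unit sphere `S^{n−1}` in `ℝⁿ` (`n ≥ 2`), i.e.
`σ` is the unique rotation-invariant probability measure carried by the unit sphere, and
let `φ(t) = E e^{t θ₁}`. Then `φ′(t) ≤ t φ″(t)` for every `t > 0`. -/
theorem sphere_mgf_deriv_ineq {n : ℕ} (hn : 2 ≤ n)
    (σ : Measure (EuclideanSpace ℝ (Fin n))) [IsProbabilityMeasure σ]
    (hrot : ∀ O : EuclideanSpace ℝ (Fin n) ≃ₗᵢ[ℝ] EuclideanSpace ℝ (Fin n), σ.map O = σ)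
    (hsph : σ (Metric.sphere (0 : EuclideanSpace ℝ (Fin n)) 1) = 1) :
    ∀ t : ℝ, 0 < t →
      deriv (fun s => ∫ y, Real.exp (s * y ⟨0, by omega⟩) ∂σ) t ≤
        t * deriv (deriv fun s => ∫ y, Real.exp (s * y ⟨0, by omega⟩) ∂σ) t := by
  intro t ht
  set X : EuclideanSpace ℝ (Fin n) → ℝ := fun y => y ⟨0, by omega⟩
  have hXmeas : Measurable X := (EuclideanSpace.proj (𝕜 := ℝ) _).continuous.measurable
  have hsymm : IdentDistrib X (-X) σ σ := by
    refine identDistrib_neg_of_map_neg_eq ?_ hXmeas fun y => rfl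
    simpa using hrot (LinearIsometryEquiv.neg ℝ)
  have hexp : integrableExpSet X σ = univ :=
    eq_univ_of_forall fun s => integrable_exp_mul_of_mem_Icc
      hXmeas.aemeasurable (EuclideanSpace.ae_apply_mem_Icc_of_measure_sphere hsph _)
  exact deriv_mgf_le_mul_deriv_deriv_mgf hsymm (by simp [hexp]) ht.le
end
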